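/- arXiv:2411.11997 — 7 statements merged into one kernel-verified Lean document; each statement's English description precedes it below -/
import Mathlib

section
/- If A is a subspace of V such that R ∈ A, then dim A^⊥ = dim V − dim A + 1. -/
/-!
Since ω is alternating, hence reflexive, `A^⊥` is the usual orthogonal complement of `A`, so
`dim A + dim A^⊥ = dim V + dim (A ∩ ker ω)`. When `R ∈ A`, `A ∩ ker ω = span {R}` is a line.
-/

open Module LinearMap

/-- The ω-orthogonal complement of a subspace `A` of `V`:
`A^⊥ = {v ∈ V | ω(v,a) = 0 for every a ∈ A}`. -/
def omegaPerp {V : Type*} [AddCommGroup V] [Module ℝ V]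
    (ω : V →ₗ[ℝ] V →ₗ[ℝ] ℝ) (A : Submodule ℝ V) : Submodule ℝ V where
  carrier := {v | ∀ a ∈ A, ω v a = 0}
  add_mem' := by
    intro x y hx hy a ha
    simp [map_add, hx a ha, hy a ha]
  zero_mem' := by
    intro a ha
    simp
  smul_mem' := by
    intro c x hx a ha
    simp [map_smul, hx a ha]

section

variable {V : Type*} [AddCommGroup V] [Module ℝ V]

theorem omegaPerp_eq_orthogonal_flip (ω : V →ₗ[ℝ] V →ₗ[ℝ] ℝ) (A : Submodule ℝ V) :
    omegaPerp ω A = BilinForm.orthogonal ω.flip A :=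
  rfl

theorem finrank_add_finrank_omegaPerp [FiniteDimensional ℝ V] (ω : V →ₗ[ℝ] V →ₗ[ℝ] ℝ)
    (hω : ω.IsRefl) (A : Submodule ℝ V) :
    finrank ℝ A + finrank ℝ (omegaPerp ω A) = finrank ℝ V + finrank ℝ ↥(A ⊓ ker ω) := by
  rw [omegaPerp_eq_orthogonal_flip, BilinForm.finrank_add_finrank_orthogonal',
    hω.ker_flip]

end

theorem perp_finrank_of_mem_general {V : Type*} [AddCommGroup V] [Module ℝ V]
    [FiniteDimensional ℝ V]
    (ω : V →ₗ[ℝ] V →ₗ[ℝ] ℝ) (halt : ∀ x, ω x x = 0)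
    (R : V) (hR : R ≠ 0) (hker : LinearMap.ker ω = Submodule.span ℝ {R})
    (A : Submodule ℝ V) (hRA : R ∈ A) :
    Module.finrank ℝ (omegaPerp ω A) = Module.finrank ℝ V - Module.finrank ℝ A + 1 := by
  have hdim_sum := finrank_add_finrank_omegaPerp ω (IsAlt.isRefl halt) A
  have hker_le : ker ω ≤ A := by rwa [hker, Submodule.span_singleton_le_iff_mem]
  rw [inf_eq_right.mpr hker_le, hker, finrank_span_singleton hR] at hdim_sum
  have := Submodule.finrank_le A
  omega

/-- If A is a subspace of V with R ∈ A, then dim A^⊥ = dim V − dim A + 1. -/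
theorem perp_finrank_of_mem {n : ℕ} {V : Type*} [AddCommGroup V] [Module ℝ V]
    [FiniteDimensional ℝ V] (hdim : Module.finrank ℝ V = 2 * n + 1)
    (ω : V →ₗ[ℝ] V →ₗ[ℝ] ℝ) (halt : ∀ x, ω x x = 0)
    (R : V) (hR : R ≠ 0) (hker : LinearMap.ker ω = Submodule.span ℝ {R})
    (A : Submodule ℝ V) (hRA : R ∈ A) :
    Module.finrank ℝ (omegaPerp ω A) = Module.finrank ℝ V - Module.finrank ℝ A + 1 :=
  perp_finrank_of_mem_general ω halt R hR hker A hRA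
end

section
/- If A is a subspace of V such that R ∉ A, then (A^⊥)^⊥ = A ⊕ span{R}, i.e. the double ω-orthogonal complement of A is the internal direct sum of A and the line spanned by R. -/
namespace LinearMap.BilinForm

open Submodule

variable {K V : Type*} [Field K] [AddCommGroup V] [Module K V] {B : LinearMap.BilinForm K V}

theorem ker_le_orthogonal (hB : B.IsRefl) (W : Submodule K V) : LinearMap.ker B ≤ B.orthogonal W :=
  orthogonal_top_eq_ker hB ▸ orthogonal_le le_top

theorem orthogonal_orthogonal_eq_sup_ker [FiniteDimensional K V] (hB : B.IsRefl)
    (W : Submodule K V) : B.orthogonal (B.orthogonal W) = W ⊔ LinearMap.ker B := by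
  have hle : W ⊔ LinearMap.ker B ≤ B.orthogonal (B.orthogonal W) :=
    sup_le (le_orthogonal_orthogonal hB) (ker_le_orthogonal hB _)
  refine (eq_of_le_of_finrank_le hle ?_).symm
  have hW := finrank_add_finrank_orthogonal' (B := B) W
  have hWperp := finrank_add_finrank_orthogonal' (B := B) (B.orthogonal W)
  have hsup := finrank_sup_add_finrank_inf_eq W (LinearMap.ker B)
  rw [inf_eq_right.mpr (ker_le_orthogonal hB W)] at hWperp
  lia

end LinearMap.BilinForm

theorem omegaPerp_eq_orthogonal {V : Type*} [AddCommGroup V] [Module ℝ V]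
    {ω : V →ₗ[ℝ] V →ₗ[ℝ] ℝ} (hω : ω.IsRefl) (A : Submodule ℝ V) :
    omegaPerp ω A = LinearMap.BilinForm.orthogonal ω A := by
  ext v
  exact ⟨fun hv a ha => hω _ _ (hv a ha), fun hv a ha => hω _ _ (hv a ha)⟩

theorem perp_perp_of_not_mem_general {V : Type*} [AddCommGroup V] [Module ℝ V]
    [FiniteDimensional ℝ V]
    (ω : V →ₗ[ℝ] V →ₗ[ℝ] ℝ) (halt : ∀ x, ω x x = 0)
    (R : V) (hker : LinearMap.ker ω = Submodule.span ℝ {R})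
    (A : Submodule ℝ V) (hRA : R ∉ A) :
    omegaPerp ω (omegaPerp ω A) = A ⊔ Submodule.span ℝ {R} ∧
      Disjoint A (Submodule.span ℝ {R}) := by
  have hrefl : ω.IsRefl := LinearMap.IsAlt.isRefl halt
  refine ⟨?_, (Submodule.disjoint_span_singleton' ?_).mpr hRA⟩
  · rw [omegaPerp_eq_orthogonal hrefl, omegaPerp_eq_orthogonal hrefl,
      LinearMap.BilinForm.orthogonal_orthogonal_eq_sup_ker hrefl, hker]
  · rintro rfl
    exact hRA A.zero_mem

/-- If R ∉ A, then (A^⊥)^⊥ = A ⊕ span{R} (an internal direct sum). -/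
theorem perp_perp_of_not_mem {n : ℕ} {V : Type*} [AddCommGroup V] [Module ℝ V]
    [FiniteDimensional ℝ V] (hdim : Module.finrank ℝ V = 2 * n + 1)
    (ω : V →ₗ[ℝ] V →ₗ[ℝ] ℝ) (halt : ∀ x, ω x x = 0)
    (R : V) (hR : R ≠ 0) (hker : LinearMap.ker ω = Submodule.span ℝ {R})
    (A : Submodule ℝ V) (hRA : R ∉ A) :
    omegaPerp ω (omegaPerp ω A) = A ⊔ Submodule.span ℝ {R} ∧
      Disjoint A (Submodule.span ℝ {R}) :=
  perp_perp_of_not_mem_general ω halt R hker A hRA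
end

section
/- For every subspace A of V, the image of A^⊥ under ♭₀ equals A° ∩ ♭₀(V) (the intersection of the annihilator of A with the range of ♭₀), and the kernel of the restriction of ♭₀ to A^⊥ equals the line spanned by R. -/
theorem LinearMap.map_subtype_ker_domRestrict_of_ker_le {R M N : Type*} [Ring R]
    [AddCommGroup M] [Module R M] [AddCommGroup N] [Module R N]
    (f : M →ₗ[R] N) {p : Submodule R M} (h : LinearMap.ker f ≤ p) :
    (LinearMap.ker (f.domRestrict p)).map p.subtype = LinearMap.ker f := by
  rw [LinearMap.ker_domRestrict, Submodule.map_comap_subtype, inf_eq_right.mpr h]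

section omegaPerp

variable {V : Type*} [AddCommGroup V] [Module ℝ V] (ω : V →ₗ[ℝ] V →ₗ[ℝ] ℝ) (A : Submodule ℝ V)

theorem ker_le_omegaPerp : LinearMap.ker ω ≤ omegaPerp ω A := fun v hv a _ => by
  rw [LinearMap.mem_ker.mp hv, LinearMap.zero_apply]

theorem map_omegaPerp :
    (omegaPerp ω A).map ω = A.dualAnnihilator ⊓ LinearMap.range ω := by
  ext α
  simp only [Submodule.mem_map, Submodule.mem_inf, Submodule.mem_dualAnnihilator,
    LinearMap.mem_range]
  constructor
  · rintro ⟨v, hv, rfl⟩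
    exact ⟨hv, v, rfl⟩
  · rintro ⟨hα, v, rfl⟩
    exact ⟨v, hα, rfl⟩

end omegaPerp

theorem flat_image_perp_and_ker_restrict_general {V : Type*} [AddCommGroup V] [Module ℝ V]
    (ω : V →ₗ[ℝ] V →ₗ[ℝ] ℝ)
    (R : V) (hker : LinearMap.ker ω = Submodule.span ℝ {R})
    (flat : V →ₗ[ℝ] Module.Dual ℝ V) (hflat : ∀ v u, flat v u = ω v u)
    (A : Submodule ℝ V) :
    Submodule.map flat (omegaPerp ω A) = A.dualAnnihilator ⊓ LinearMap.range flat ∧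
      Submodule.map (omegaPerp ω A).subtype
        (LinearMap.ker (flat.domRestrict (omegaPerp ω A))) = Submodule.span ℝ {R} := by
  obtain rfl : flat = ω := LinearMap.ext fun v => LinearMap.ext (hflat v)
  refine ⟨map_omegaPerp flat A, ?_⟩
  rw [flat.map_subtype_ker_domRestrict_of_ker_le (ker_le_omegaPerp flat A), hker]

/-- For every subspace A of V, the image of A^⊥ under ♭₀ : V → V*, ♭₀(v) = ω(v,·),
equals A° ∩ ♭₀(V), and the kernel of the restriction of ♭₀ to A^⊥ equals the line
spanned by R. -/
theorem flat_image_perp_and_ker_restrict {n : ℕ} {V : Type*} [AddCommGroup V] [Module ℝ V]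
    [FiniteDimensional ℝ V] (hdim : Module.finrank ℝ V = 2 * n + 1)
    (ω : V →ₗ[ℝ] V →ₗ[ℝ] ℝ) (halt : ∀ x, ω x x = 0)
    (R : V) (hR : R ≠ 0) (hker : LinearMap.ker ω = Submodule.span ℝ {R})
    (flat : V →ₗ[ℝ] Module.Dual ℝ V) (hflat : ∀ v u, flat v u = ω v u)
    (A : Submodule ℝ V) :
    Submodule.map flat (omegaPerp ω A) = A.dualAnnihilator ⊓ LinearMap.range flat ∧
      Submodule.map (omegaPerp ω A).subtype
        (LinearMap.ker (flat.domRestrict (omegaPerp ω A))) = Submodule.span ℝ {R} :=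
  flat_image_perp_and_ker_restrict_general ω R hker flat hflat A
end

section
/- For a subspace A of V, the annihilator A° is contained in the range ♭₀(V) if and only if R ∈ A. -/
namespace LinearMap.IsRefl

variable {K V : Type*} [Field K] [AddCommGroup V] [Module K V] [Module.IsReflexive K V]
  {B : V →ₗ[K] Module.Dual K V}

theorem range_eq_dualAnnihilator_ker (hB : B.IsRefl) : range B = (ker B).dualAnnihilator := by
  rw [← hB.ker_flip, dualAnnihilator_ker_eq_range_flip, flip_flip]

theorem dualAnnihilator_le_range_iff (hB : B.IsRefl) (A : Submodule K V) :
    A.dualAnnihilator ≤ range B ↔ ker B ≤ A := by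
  rw [hB.range_eq_dualAnnihilator_ker, Subspace.dualAnnihilator_le_dualAnnihilator_iff]

end LinearMap.IsRefl

/-- For a subspace A of V, the annihilator A° is contained in the range of
♭₀ : V → V*, ♭₀(v) = ω(v,·), if and only if R ∈ A. -/
theorem dualAnnihilator_le_range_iff {V : Type*} [AddCommGroup V] [Module ℝ V]
    [FiniteDimensional ℝ V]
    (ω : V →ₗ[ℝ] V →ₗ[ℝ] ℝ) (halt : ∀ x, ω x x = 0)
    (R : V) (hker : LinearMap.ker ω = Submodule.span ℝ {R})
    (flat : V →ₗ[ℝ] Module.Dual ℝ V) (hflat : ∀ v u, flat v u = ω v u)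
    (A : Submodule ℝ V) :
    A.dualAnnihilator ≤ LinearMap.range flat ↔ R ∈ A := by
  obtain rfl : ω = flat := (LinearMap.ext₂ hflat).symm
  have hω : ω.IsRefl := LinearMap.IsAlt.isRefl halt
  rw [hω.dualAnnihilator_le_range_iff, hker, Submodule.span_singleton_le_iff_mem]
end

section
/- Let B be a subspace of V with R ∉ B, set W = B^⊥ and C = B ∩ B^⊥ (note C ⊆ W and R ∈ W), and let π : W → W/C be the quotient projection. Then there exists a unique alternating bilinear form ω̄ on the quotient space W/C satisfying ω̄(π(u), π(v)) = ω(u,v) for all u, v ∈ W; moreover π(R) ≠ 0 and the kernel {x ∈ W/C : ω̄(x,y) = 0 for every y ∈ W/C} of ω̄ equals the one-dimensional subspace spanned by π(R). -/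
open Submodule LinearMap

theorem LinearMap.range_flip_eq_dualAnnihilator_ker {K V : Type*} [Field K] [AddCommGroup V]
    [Module K V] [FiniteDimensional K V] (f : V →ₗ[K] V →ₗ[K] K) :
    range f.flip = (ker f).dualAnnihilator := by
  have hflip : f.flip = f.dualMap ∘ₗ (Module.evalEquiv K V).toLinearMap := rfl
  rw [hflip, range_comp_of_range_eq_top _ (Module.evalEquiv K V).range,
    range_dualMap_eq_dualAnnihilator_ker]

theorem Submodule.comap_subtype_sup_of_le {R M : Type*} [Ring R] [AddCommGroup M] [Module R M]
    {W K : Submodule R M} (B : Submodule R M) (hK : K ≤ W) :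
    (B ⊔ K).comap W.subtype = B.comap W.subtype ⊔ K.comap W.subtype := by
  apply map_injective_of_injective W.injective_subtype
  rw [map_sup, map_comap_subtype, map_comap_subtype, map_comap_subtype, inf_eq_right.mpr hK,
    inf_sup_assoc_of_le _ hK]

theorem Submodule.map_mkQ_comap_subtype_sup_span_singleton {R M : Type*} [Ring R]
    [AddCommGroup M] [Module R M] {W : Submodule R M} (B : Submodule R M) {x : M} (hx : x ∈ W) :
    ((B ⊔ span R {x}).comap W.subtype).map (B.comap W.subtype).mkQ =
      span R {(B.comap W.subtype).mkQ ⟨x, hx⟩} := by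
  have hspan : (span R {x}).comap W.subtype = span R {⟨x, hx⟩} := by
    rw [← comap_map_eq_of_injective W.injective_subtype (span R {⟨x, hx⟩}), map_span,
      Set.image_singleton, subtype_apply]
  rw [comap_subtype_sup_of_le B ((span_singleton_le_iff_mem x W).mpr hx), hspan, map_sup,
    mkQ_map_self, bot_sup_eq, map_span, Set.image_singleton]

theorem LinearMap.ker_liftQ₂ {R M N P : Type*} [CommRing R] [AddCommGroup M] [AddCommGroup N]
    [AddCommGroup P] [Module R M] [Module R N] [Module R P] {M' : Submodule R M}
    {N' : Submodule R N} {f : M →ₗ[R] N →ₗ[R] P} (hM' : M' ≤ ker f) (hN' : N' ≤ ker f.flip) :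
    ker (f.liftQ₂ M' N' hM' hN') = (ker f).map M'.mkQ := by
  ext x
  induction x using Submodule.Quotient.induction_on with | H u => ?_
  rw [← mkQ_apply, ← mem_comap (p := (ker f).map M'.mkQ), comap_map_mkQ, sup_eq_right.mpr hM',
    mkQ_apply, mem_ker, mem_ker]
  simp [LinearMap.ext_iff, Submodule.Quotient.forall]

section

variable {V : Type*} [AddCommGroup V] [Module ℝ V] (ω : V →ₗ[ℝ] V →ₗ[ℝ] ℝ)

theorem omegaPerp_eq_dualCoannihilator_map_flip (A : Submodule ℝ V) :
    omegaPerp ω A = (A.map ω.flip).dualCoannihilator := by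
  ext v
  simp [mem_dualCoannihilator, omegaPerp]

theorem omegaPerp_eq_comap_flip_of_isRefl (hω : ω.IsRefl) (A : Submodule ℝ V) :
    omegaPerp ω A = A.dualAnnihilator.comap ω.flip := by
  ext v
  simp [omegaPerp, mem_dualAnnihilator, hω.eq_iff]

theorem omegaPerp_omegaPerp_of_isRefl [FiniteDimensional ℝ V] (hω : ω.IsRefl)
    (B : Submodule ℝ V) : omegaPerp ω (omegaPerp ω B) = B ⊔ ker ω := by
  rw [omegaPerp_eq_dualCoannihilator_map_flip, omegaPerp_eq_comap_flip_of_isRefl ω hω,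
    map_comap_eq, range_flip_eq_dualAnnihilator_ker, ← dualAnnihilator_sup_eq,
    Subspace.dualAnnihilator_dualCoannihilator_eq, sup_comm]

theorem ker_domRestrict₁₂_eq_comap_omegaPerp (A : Submodule ℝ V) :
    ker (ω.domRestrict₁₂ A A) = (omegaPerp ω A).comap A.subtype := by
  ext u
  simp [omegaPerp, LinearMap.ext_iff, domRestrict₁₂_apply]

end

theorem quotient_form_exists_unique_general {V : Type*} [AddCommGroup V] [Module ℝ V]
    [FiniteDimensional ℝ V]
    (ω : V →ₗ[ℝ] V →ₗ[ℝ] ℝ) (halt : ∀ x, ω x x = 0)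
    (R : V) (hker : LinearMap.ker ω = Submodule.span ℝ {R})
    (B : Submodule ℝ V) (hRB : R ∉ B) (hRW : R ∈ omegaPerp ω B)
    (C : Submodule ℝ (omegaPerp ω B))
    (hC : C = Submodule.comap (omegaPerp ω B).subtype (B ⊓ omegaPerp ω B)) :
    C.mkQ ⟨R, hRW⟩ ≠ 0 ∧
      ∃ ωbar : ((omegaPerp ω B) ⧸ C) →ₗ[ℝ] ((omegaPerp ω B) ⧸ C) →ₗ[ℝ] ℝ,
        ((∀ x, ωbar x x = 0) ∧
          (∀ u v : omegaPerp ω B, ωbar (C.mkQ u) (C.mkQ v) = ω u v) ∧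
          LinearMap.ker ωbar = Submodule.span ℝ {C.mkQ ⟨R, hRW⟩}) ∧
        ∀ ωbar' : ((omegaPerp ω B) ⧸ C) →ₗ[ℝ] ((omegaPerp ω B) ⧸ C) →ₗ[ℝ] ℝ,
          (∀ u v : omegaPerp ω B, ωbar' (C.mkQ u) (C.mkQ v) = ω u v) → ωbar' = ωbar := by
  obtain rfl : C = B.comap (omegaPerp ω B).subtype := by
    rw [hC, comap_inf, comap_subtype_self, inf_top_eq]
  have hrefl : ω.IsRefl := IsAlt.isRefl halt
  have hrad : ker (ω.domRestrict₁₂ (omegaPerp ω B) (omegaPerp ω B)) =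
      (B ⊔ span ℝ {R}).comap (omegaPerp ω B).subtype := by
    rw [ker_domRestrict₁₂_eq_comap_omegaPerp, omegaPerp_omegaPerp_of_isRefl ω hrefl, hker]
  have hCker : B.comap (omegaPerp ω B).subtype ≤
      ker (ω.domRestrict₁₂ (omegaPerp ω B) (omegaPerp ω B)) := by
    rw [hrad]
    exact comap_mono le_sup_left
  refine ⟨?_, (hrefl.domRestrict _).liftQ₂ _ _ hCker, ⟨?_, fun u v => rfl, ?_⟩, ?_⟩
  · rw [Ne, mkQ_apply, Quotient.mk_eq_zero]
    exact hRB
  · intro x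
    induction x using Quotient.induction_on with | H u => exact halt u
  · rw [ker_liftQ₂, hrad, map_mkQ_comap_subtype_sup_span_singleton]
  · intro ωbar' h
    ext u v
    exact h u v

/-- Let B be a subspace of V with R ∉ B, set W = B^⊥ and C = B ∩ B^⊥
(note C ⊆ W and R ∈ W), and let π : W → W/C be the quotient projection. Then
π(R) ≠ 0 and there exists a unique bilinear form ω̄ on W/C satisfying
ω̄(π u, π v) = ω(u,v) for all u, v ∈ W; this ω̄ is alternating and its kernel
equals the one-dimensional subspace spanned by π(R). -/
theorem quotient_form_exists_unique {n : ℕ} {V : Type*} [AddCommGroup V] [Module ℝ V]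
    [FiniteDimensional ℝ V] (hdim : Module.finrank ℝ V = 2 * n + 1)
    (ω : V →ₗ[ℝ] V →ₗ[ℝ] ℝ) (halt : ∀ x, ω x x = 0)
    (R : V) (hR : R ≠ 0) (hker : LinearMap.ker ω = Submodule.span ℝ {R})
    (B : Submodule ℝ V) (hRB : R ∉ B) (hRW : R ∈ omegaPerp ω B)
    (C : Submodule ℝ (omegaPerp ω B))
    (hC : C = Submodule.comap (omegaPerp ω B).subtype (B ⊓ omegaPerp ω B)) :
    C.mkQ ⟨R, hRW⟩ ≠ 0 ∧
      ∃ ωbar : ((omegaPerp ω B) ⧸ C) →ₗ[ℝ] ((omegaPerp ω B) ⧸ C) →ₗ[ℝ] ℝ,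
        ((∀ x, ωbar x x = 0) ∧
          (∀ u v : omegaPerp ω B, ωbar (C.mkQ u) (C.mkQ v) = ω u v) ∧
          LinearMap.ker ωbar = Submodule.span ℝ {C.mkQ ⟨R, hRW⟩}) ∧
        ∀ ωbar' : ((omegaPerp ω B) ⧸ C) →ₗ[ℝ] ((omegaPerp ω B) ⧸ C) →ₗ[ℝ] ℝ,
          (∀ u v : omegaPerp ω B, ωbar' (C.mkQ u) (C.mkQ v) = ω u v) → ωbar' = ωbar :=
  quotient_form_exists_unique_general ω halt R hker B hRB hRW C hC
end

section
/- The linear map ♭ : V → V* defined by ♭(v) = ω(v,·) + η(v)η is a linear isomorphism from V onto its dual space V*. -/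
/- A vector `v` in the kernel of `w ↦ ω(v,w) + η(v)η(w)` pairs trivially with `R`, since `R` spans
`ker ω` and `ω` is alternating; testing against `R` gives `η(v) = 0`, so `v ∈ ker ω = ℝR`, and
`η(R) = 1` forces `v = 0`. Injectivity then suffices because `V` and `V*` have the same dimension. -/

theorem LinearMap.IsAlt.eq_zero_of_add_mul_eq_zero {K V : Type*} [Field K] [AddCommGroup V]
    [Module K V] {ω : V →ₗ[K] V →ₗ[K] K} (hω : ω.IsAlt) {R : V}
    (hker : LinearMap.ker ω = Submodule.span K {R}) {η : Module.Dual K V} (hη : η R = 1) {v : V}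
    (hv : ∀ u, ω v u + η v * η u = 0) : v = 0 := by
  have hR : R ∈ LinearMap.ker ω := hker ▸ Submodule.mem_span_singleton_self R
  have hvR : ω v R = 0 := hω.eq_iff.mpr (LinearMap.congr_fun (LinearMap.mem_ker.mp hR) v)
  have hηv : η v = 0 := by simpa [hvR, hη] using hv R
  have hvker : v ∈ LinearMap.ker ω := LinearMap.mem_ker.mpr <| LinearMap.ext fun u => by
    simpa [hηv] using hv u
  obtain ⟨c, rfl⟩ := Submodule.mem_span_singleton.mp (hker ▸ hvker)
  rw [map_smul, hη, smul_eq_mul, mul_one] at hηv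
  rw [hηv, zero_smul]

theorem flat_bijective_general {V : Type*} [AddCommGroup V] [Module ℝ V]
    [FiniteDimensional ℝ V]
    (ω : V →ₗ[ℝ] V →ₗ[ℝ] ℝ) (halt : ∀ x, ω x x = 0)
    (R : V) (hker : LinearMap.ker ω = Submodule.span ℝ {R})
    (η : Module.Dual ℝ V) (hη : η R = 1)
    (flat : V →ₗ[ℝ] Module.Dual ℝ V)
    (hflat : ∀ v u, flat v u = ω v u + η v * η u) :
    Function.Bijective flat := by
  have hinj : Function.Injective flat := (injective_iff_map_eq_zero flat).mpr fun v hv =>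
    LinearMap.IsAlt.eq_zero_of_add_mul_eq_zero halt hker hη fun u => by
      rw [← hflat, hv, LinearMap.zero_apply]
  exact ⟨hinj, (LinearMap.injective_iff_surjective_of_finrank_eq_finrank
    Subspace.dual_finrank_eq.symm).mp hinj⟩

/-- The linear map ♭ : V → V*, ♭(v) = ω(v,·) + η(v)η, is a linear isomorphism
from V onto its dual space V*. -/
theorem flat_bijective {n : ℕ} {V : Type*} [AddCommGroup V] [Module ℝ V]
    [FiniteDimensional ℝ V] (hdim : Module.finrank ℝ V = 2 * n + 1)
    (ω : V →ₗ[ℝ] V →ₗ[ℝ] ℝ) (halt : ∀ x, ω x x = 0)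
    (R : V) (hR : R ≠ 0) (hker : LinearMap.ker ω = Submodule.span ℝ {R})
    (η : Module.Dual ℝ V) (hη : η R = 1)
    (flat : V →ₗ[ℝ] Module.Dual ℝ V)
    (hflat : ∀ v u, flat v u = ω v u + η v * η u) :
    Function.Bijective flat :=
  flat_bijective_general ω halt R hker η hη flat hflat
end

section
/- Let β ∈ V* and let X_β be the unique vector with η(X_β) = 0 and ω(X_β,u) = β(u) − β(R)η(u) for all u ∈ V. Define the alternating bilinear form ω_β on V by ω_β(u,v) = ω(u,v) + β(u)η(v) − β(v)η(u). Then the kernel {v ∈ V : ω_β(v,u) = 0 for every u ∈ V} of ω_β equals the one-dimensional subspace spanned by E := X_β + R, and η(E) = 1. (This is the pointwise content of the proposition that for a cosymplectic structure (ω,η) and Hamiltonian H, the pair (ω + dH∧η, η) is again cosymplectic with Reeb vector field equal to the evolution vector field of H.) -/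
open LinearMap Submodule

section

variable {K M : Type*} [CommRing K] [AddCommGroup M] [Module K M]

theorem eq_zero_of_mem_span_singleton_of_dual_eq_zero {η : Module.Dual K M} {R w : M}
    (hη : η R = 1) (hw : w ∈ K ∙ R) (hηw : η w = 0) : w = 0 := by
  obtain ⟨t, rfl⟩ := mem_span_singleton.mp hw
  simp_all

theorem eq_span_singleton_of_forall_dual_eq_zero {S : Submodule K M} {η : Module.Dual K M}
    {E : M} (hE : E ∈ S) (hηE : η E = 1) (hinj : ∀ w ∈ S, η w = 0 → w = 0) : S = K ∙ E := by
  refine le_antisymm (fun v hv => ?_) ((span_singleton_le_iff_mem E _).mpr hE)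
  have hw : v - η v • E = 0 :=
    hinj _ (sub_mem hv (smul_mem _ _ hE)) (by simp [hηE])
  rw [sub_eq_zero.mp hw]
  exact smul_mem _ _ (mem_span_singleton_self E)

variable {ω ωβ : M →ₗ[K] M →ₗ[K] K} {η β : Module.Dual K M} {R Xβ : M}

theorem twisted_apply_eq_zero (halt : ω.IsAlt) (hR : R ∈ ker ω) (hη : η R = 1)
    (hX1 : η Xβ = 0) (hX2 : ∀ u, ω Xβ u = β u - β R * η u)
    (hωβ : ∀ u v, ωβ u v = ω u v + β u * η v - β v * η u) (u : M) :
    ωβ (Xβ + R) u = 0 := by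
  have hβX : β Xβ = 0 := by simpa [halt.self_eq_zero, hX1] using (hX2 Xβ).symm
  rw [hωβ, map_add, LinearMap.add_apply, hX2, mem_ker.mp hR, map_add, map_add, hβX, hX1, hη]
  simp only [LinearMap.zero_apply]
  ring

theorem mem_ker_of_mem_ker_twisted (halt : ω.IsAlt) (hR : R ∈ ker ω) (hη : η R = 1)
    (hωβ : ∀ u v, ωβ u v = ω u v + β u * η v - β v * η u) {w : M} (hw : w ∈ ker ωβ)
    (hηw : η w = 0) : w ∈ ker ω := by
  have hωβw : ∀ u, ωβ w u = 0 := fun u => by rw [mem_ker.mp hw, LinearMap.zero_apply]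
  have hωwR : ω w R = 0 := halt.eq_iff.mp (by rw [mem_ker.mp hR, LinearMap.zero_apply])
  have hβw : β w = 0 := by simpa [hωwR, hη, hηw] using (hωβ w R).symm.trans (hωβw R)
  refine mem_ker.mpr (LinearMap.ext fun u => ?_)
  simpa [hβw, hηw] using (hωβ w u).symm.trans (hωβw u)

end

theorem modified_form_kernel_general {V : Type*} [AddCommGroup V] [Module ℝ V]
    (ω : V →ₗ[ℝ] V →ₗ[ℝ] ℝ) (halt : ∀ x, ω x x = 0)
    (R : V) (hker : LinearMap.ker ω = Submodule.span ℝ {R})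
    (η : Module.Dual ℝ V) (hη : η R = 1)
    (β : Module.Dual ℝ V) (Xβ : V) (hX1 : η Xβ = 0)
    (hX2 : ∀ u, ω Xβ u = β u - β R * η u)
    (ωβ : V →ₗ[ℝ] V →ₗ[ℝ] ℝ)
    (hωβ : ∀ u v, ωβ u v = ω u v + β u * η v - β v * η u) :
    LinearMap.ker ωβ = Submodule.span ℝ {Xβ + R} ∧ η (Xβ + R) = 1 := by
  have hR : R ∈ ker ω := hker ▸ mem_span_singleton_self R
  have hηE : η (Xβ + R) = 1 := by simp [hX1, hη]
  refine ⟨eq_span_singleton_of_forall_dual_eq_zero ?_ hηE fun w hw hηw => ?_, hηE⟩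
  · exact mem_ker.mpr (LinearMap.ext (twisted_apply_eq_zero halt hR hη hX1 hX2 hωβ))
  · refine eq_zero_of_mem_span_singleton_of_dual_eq_zero hη ?_ hηw
    exact hker ▸ mem_ker_of_mem_ker_twisted halt hR hη hωβ hw hηw

/-- Let β ∈ V* and let X_β be the unique vector with η(X_β) = 0 and
ω(X_β,u) = β(u) − β(R)η(u) for all u. Define ω_β(u,v) = ω(u,v) + β(u)η(v) − β(v)η(u).
Then ker ω_β = span{X_β + R} and η(X_β + R) = 1. -/
theorem modified_form_kernel {n : ℕ} {V : Type*} [AddCommGroup V] [Module ℝ V]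
    [FiniteDimensional ℝ V] (hdim : Module.finrank ℝ V = 2 * n + 1)
    (ω : V →ₗ[ℝ] V →ₗ[ℝ] ℝ) (halt : ∀ x, ω x x = 0)
    (R : V) (hR : R ≠ 0) (hker : LinearMap.ker ω = Submodule.span ℝ {R})
    (η : Module.Dual ℝ V) (hη : η R = 1)
    (β : Module.Dual ℝ V) (Xβ : V) (hX1 : η Xβ = 0)
    (hX2 : ∀ u, ω Xβ u = β u - β R * η u)
    (ωβ : V →ₗ[ℝ] V →ₗ[ℝ] ℝ)
    (hωβ : ∀ u v, ωβ u v = ω u v + β u * η v - β v * η u) :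
    LinearMap.ker ωβ = Submodule.span ℝ {Xβ + R} ∧ η (Xβ + R) = 1 :=
  modified_form_kernel_general ω halt R hker η hη β Xβ hX1 hX2 ωβ hωβ
end
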